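/- Let F be a homogeneous cubic polynomial in 5 variables over ℂ and let W ⊆ ℂ⁵ be a 3-dimensional linear subspace such that every first partial derivative ∂F/∂Xᵢ vanishes at every point of W. Then for every v ∈ ℂ⁵ the quadric ∂_v F = Σᵢ vᵢ ∂F/∂Xᵢ is a degenerate quadratic form. -/

import Mathlib

/-!
`G = ∂_v F` is a quadratic form vanishing on `W`. Its polar form `B(w, x) = (∂_w G)(x)` is the
bilinear form of the (constant) Hessian of `G`; it is symmetric, and `B(x, x) = 2 G(x)` by Euler's
identity, so polarization makes `W` totally isotropic for `B`. As `2 · dim W > 5`, the map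
`w ↦ B(w, ·)` from `W` to the annihilator of `W` (of dimension `5 - dim W`) has a nonzero `w` in
its kernel, and then `∂_w G` vanishes at every point, hence is the zero polynomial.
-/

open MvPolynomial

lemma LinearMap.exists_ne_zero_mem_ker_of_isotropic {K V : Type*} [Field K] [AddCommGroup V]
    [Module K V] [FiniteDimensional K V] (B : V →ₗ[K] V →ₗ[K] K) (W : Subspace K V)
    (hB : ∀ w ∈ W, ∀ x ∈ W, B w x = 0) (hdim : Module.finrank K V < 2 * Module.finrank K W) :
    ∃ w ∈ W, w ≠ 0 ∧ B w = 0 := by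
  set f := B ∘ₗ W.subtype
  have hrange : LinearMap.range f ≤ W.dualAnnihilator := by
    rintro _ ⟨w, rfl⟩
    exact (Submodule.mem_dualAnnihilator _).mpr (hB w w.2)
  have hker : 0 < Module.finrank K (LinearMap.ker f) := by
    have h1 : Module.finrank K (LinearMap.range f) ≤ Module.finrank K W.dualAnnihilator :=
      Submodule.finrank_mono hrange
    have h2 : Module.finrank K W + Module.finrank K W.dualAnnihilator = Module.finrank K V :=
      W.finrank_add_finrank_dualAnnihilator_eq
    have := f.finrank_range_add_finrank_ker
    omega
  obtain ⟨w, hw, hw0⟩ :=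
    Submodule.exists_mem_ne_zero_of_ne_bot (Submodule.one_le_finrank_iff.mp hker)
  exact ⟨w, w.2, by simpa using hw0, hw⟩

noncomputable section

namespace MvPolynomial

variable {σ R : Type*}

section CommSemiring

variable [CommSemiring R]

def hessian (p : MvPolynomial σ R) : Matrix σ σ R :=
  Matrix.of fun j k => coeff 0 (pderiv k (pderiv j p))

lemma IsHomogeneous.eval_eq_coeff_zero {p : MvPolynomial σ R} (hp : p.IsHomogeneous 0)
    (x : σ → R) : eval x p = coeff 0 p := by
  rw [← totalDegree_zero_iff_isHomogeneous, totalDegree_eq_zero_iff_eq_C] at hp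
  conv_lhs => rw [hp]
  exact eval_C _

variable [Fintype σ]

def dirDeriv (w : σ → R) (p : MvPolynomial σ R) : MvPolynomial σ R :=
  ∑ j, w j • pderiv j p

lemma eval_dirDeriv (x w : σ → R) (p : MvPolynomial σ R) :
    eval x (dirDeriv w p) = ∑ j, w j * eval x (pderiv j p) := by
  simp only [dirDeriv, map_sum, smul_eval]

lemma IsHomogeneous.dirDeriv {p : MvPolynomial σ R} {n : ℕ} (hp : p.IsHomogeneous n)
    (w : σ → R) : (p.dirDeriv w).IsHomogeneous (n - 1) := by
  simp only [← mem_homogeneousSubmodule, MvPolynomial.dirDeriv] at hp ⊢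
  exact Submodule.sum_mem _ fun j _ => Submodule.smul_mem _ _ hp.pderiv

lemma IsHomogeneous.eval_dirDeriv_self {p : MvPolynomial σ R} {n : ℕ} (hp : p.IsHomogeneous n)
    (x : σ → R) : eval x (p.dirDeriv x) = n * eval x p := by
  simpa [eval_dirDeriv, nsmul_eq_mul] using congrArg (eval x) hp.sum_X_mul_pderiv

lemma IsHomogeneous.eval_eq_sum_of_degree_one {p : MvPolynomial σ R} (hp : p.IsHomogeneous 1)
    (x : σ → R) : eval x p = ∑ k, x k * coeff 0 (pderiv k p) := by
  have h := hp.eval_dirDeriv_self x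
  rw [Nat.cast_one, one_mul, eval_dirDeriv] at h
  rw [← h]
  exact Finset.sum_congr rfl fun k _ => by rw [(hp.pderiv (i := k)).eval_eq_coeff_zero]

lemma IsHomogeneous.toLinearMap₂'_hessian [DecidableEq σ] {p : MvPolynomial σ R}
    (hp : p.IsHomogeneous 2) (w x : σ → R) :
    Matrix.toLinearMap₂' R (hessian p) w x = eval x (p.dirDeriv w) := by
  simp only [Matrix.toLinearMap₂'_apply, eval_dirDeriv, smul_eq_mul, Finset.mul_sum,
    (hp.pderiv (i := _)).eval_eq_sum_of_degree_one x, hessian, Matrix.of_apply]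

end CommSemiring

section CommRing

variable [CommRing R]

lemma pderiv_pderiv_comm (i j : σ) (p : MvPolynomial σ R) :
    pderiv i (pderiv j p) = pderiv j (pderiv i p) := by
  classical
  have h : ⁅pderiv i, pderiv j⁆ = (0 : Derivation R (MvPolynomial σ R) (MvPolynomial σ R)) :=
    derivation_ext fun k => by
      rw [Derivation.commutator_apply]
      simp [pderiv_X, Pi.single_apply, apply_ite]
  have := congr($h p)
  rwa [Derivation.commutator_apply, Derivation.zero_apply, sub_eq_zero] at this

lemma hessian_isSymm (p : MvPolynomial σ R) : (hessian p).IsSymm :=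
  Matrix.ext fun j k => by simp [hessian, pderiv_pderiv_comm]

lemma IsHomogeneous.toLinearMap₂'_hessian_eq_zero [Fintype σ] [DecidableEq σ] [IsDomain R]
    [NeZero (2 : R)] {p : MvPolynomial σ R} (hp : p.IsHomogeneous 2) {W : Submodule R (σ → R)}
    (hpW : ∀ x ∈ W, eval x p = 0) {w x : σ → R} (hw : w ∈ W) (hx : x ∈ W) :
    Matrix.toLinearMap₂' R (hessian p) w x = 0 := by
  set B : (σ → R) →ₗ[R] (σ → R) →ₗ[R] R := Matrix.toLinearMap₂' R (hessian p)
  have hdiag : ∀ y ∈ W, B y y = 0 := fun y hy => by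
    rw [hp.toLinearMap₂'_hessian, hp.eval_dirDeriv_self, hpW y hy, mul_zero]
  have hsymm : B x w = B w x := by
    rw [Matrix.toLinearMap₂'_apply', Matrix.toLinearMap₂'_apply', Matrix.dotProduct_mulVec,
      ← Matrix.mulVec_transpose, (hessian_isSymm p).eq, dotProduct_comm]
  have h := hdiag (w + x) (W.add_mem hw hx)
  simp only [map_add, LinearMap.add_apply, hdiag w hw, hdiag x hx, hsymm] at h
  rw [zero_add, add_zero, ← two_mul] at h
  exact (mul_eq_zero.mp h).resolve_left two_ne_zero

end CommRing

end MvPolynomial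

end

/-- If all first partial derivatives of a homogeneous cubic `F` in 5 variables vanish on a
3-dimensional linear subspace `W ⊆ ℂ⁵`, then every directional derivative `∂_v F` is a
degenerate quadratic form. -/
theorem stmt_7 (F : MvPolynomial (Fin 5) ℂ) (hF : F.IsHomogeneous 3)
    (W : Submodule ℂ (Fin 5 → ℂ)) (hW : Module.finrank ℂ W = 3)
    (hv : ∀ x ∈ W, ∀ i, MvPolynomial.eval x (pderiv i F) = 0) :
    ∀ v : Fin 5 → ℂ, ∃ w : Fin 5 → ℂ, w ≠ 0 ∧
      ∑ j, w j • pderiv j (∑ i, v i • pderiv i F) = 0 := by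
  intro v
  change ∃ w, w ≠ 0 ∧ (F.dirDeriv v).dirDeriv w = 0
  set G := F.dirDeriv v
  have hG : G.IsHomogeneous 2 := hF.dirDeriv v
  have hGW : ∀ x ∈ W, eval x G = 0 := fun x hx => by
    simp [G, eval_dirDeriv, hv x hx]
  obtain ⟨w, -, hw0, hBw⟩ := LinearMap.exists_ne_zero_mem_ker_of_isotropic
    (Matrix.toLinearMap₂' ℂ (hessian G)) W
    (fun w hw x hx => hG.toLinearMap₂'_hessian_eq_zero hGW hw hx) (by simp [hW])
  refine ⟨w, hw0, MvPolynomial.funext fun x => ?_⟩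
  rw [map_zero, ← hG.toLinearMap₂'_hessian w x, hBw, LinearMap.zero_apply]
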